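/- arXiv:math/0410137 — 2 statements merged into one kernel-verified Lean document; each statement's English description precedes it below -/
import Mathlib

section
/- For every h = (h_1,...,h_N) ∈ ℝ^N, one has ‖∇h‖₂ ≤ N·‖Δh‖₂, where ‖∇h‖₂ and ‖Δh‖₂ are the discrete gradient and Laplacian norms. More precisely, ‖∇h‖₂² ≤ (N(N-1)/2)·‖Δh‖₂². -/
/-!
Write `g i = h (i + 1) - h i`. Telescoping, `g i = g 1 + ∑_{j=2}^{i} (g j - g (j - 1))`, and the
summands on the right are, up to sign, `g 1 = h 2 - h 1` and the interior Laplacian terms, so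
Cauchy–Schwarz gives `g i ^ 2 ≤ i ‖Δh‖₂²`. Summing over `i = 1, …, N - 1` gives the factor
`N (N - 1) / 2 ≤ N ^ 2`.
-/

open Finset

theorem sq_add_sum_le_mul (a : ℝ) (f : ℕ → ℝ) (n : ℕ) :
    (a + ∑ j ∈ range n, f j) ^ 2 ≤ (n + 1) * (a ^ 2 + ∑ j ∈ range n, f j ^ 2) := by
  have := sq_sum_le_card_mul_sum_sq (s := range (n + 1)) (f := fun | 0 => a | j + 1 => f j)
  simpa [sum_range_succ', add_comm] using this

theorem sq_le_mul_sq_add_sum_sq_sub (g : ℕ → ℝ) (n : ℕ) :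
    g n ^ 2 ≤ (n + 1) * (g 0 ^ 2 + ∑ j ∈ range n, (g (j + 1) - g j) ^ 2) := by
  have hg : g n = g 0 + ∑ j ∈ range n, (g (j + 1) - g j) := by
    rw [sum_range_sub]; ring
  rw [hg]
  exact sq_add_sum_le_mul _ _ n

theorem sum_range_succ_cast_add_one (n : ℕ) :
    ∑ i ∈ range (n + 1), ((i : ℝ) + 1) = (n + 1) * (n + 2) / 2 := by
  induction n with
  | zero => norm_num
  | succ n ih => rw [sum_range_succ, ih]; push_cast; ring

theorem sum_sq_le_mul_sq_add_sum_sq_sub (g : ℕ → ℝ) (n : ℕ) :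
    ∑ i ∈ range (n + 1), g i ^ 2
      ≤ (n + 1) * (n + 2) / 2 * (g 0 ^ 2 + ∑ j ∈ range n, (g (j + 1) - g j) ^ 2) := by
  set B := g 0 ^ 2 + ∑ j ∈ range n, (g (j + 1) - g j) ^ 2
  have hpartial : ∀ i ≤ n, g 0 ^ 2 + ∑ j ∈ range i, (g (j + 1) - g j) ^ 2 ≤ B := fun i hi =>
    add_le_add_right (sum_le_sum_of_subset_of_nonneg (range_mono hi)
      fun _ _ _ => sq_nonneg _) _
  calc ∑ i ∈ range (n + 1), g i ^ 2 ≤ ∑ i ∈ range (n + 1), ((i : ℝ) + 1) * B :=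
        sum_le_sum fun i hi => (sq_le_mul_sq_add_sum_sq_sub g i).trans <|
          mul_le_mul_of_nonneg_left (hpartial i (Nat.lt_succ_iff.mp (mem_range.mp hi)))
            (by positivity)
    _ = (n + 1) * (n + 2) / 2 * B := by rw [← sum_mul, sum_range_succ_cast_add_one]

theorem sqrt_le_mul_sqrt_of_le_mul {a b c x : ℝ} (hab : a ≤ c * b) (hc : c ≤ x ^ 2)
    (hb : 0 ≤ b) (hx : 0 ≤ x) : √a ≤ x * √b :=
  calc √a ≤ √(x ^ 2 * b) := Real.sqrt_le_sqrt (hab.trans (mul_le_mul_of_nonneg_right hc hb))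
    _ = x * √b := by rw [Real.sqrt_mul (sq_nonneg x), Real.sqrt_sq hx]

/-- Lemma 2.1, second inequality: `‖∇h‖₂ ≤ N·‖Δh‖₂`, and more precisely
`‖∇h‖₂² ≤ (N(N-1)/2)·‖Δh‖₂²`, where `‖∇h‖₂² = Σ_{i=1}^{N-1}(h_{i+1}-h_i)²` and
`‖Δh‖₂² = Σ_{i=2}^{N-1}(2h_i - h_{i+1} - h_{i-1})² + (h_2-h_1)² + (h_N - h_{N-1})²`. -/
theorem stmt_1 (N : ℕ) (hN : 2 ≤ N) (h : ℕ → ℝ) :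
    Real.sqrt (∑ i ∈ Finset.Icc 1 (N - 1), (h (i + 1) - h i) ^ 2)
      ≤ (N : ℝ) * Real.sqrt
        ((∑ i ∈ Finset.Icc 2 (N - 1), (2 * h i - h (i + 1) - h (i - 1)) ^ 2)
          + (h 2 - h 1) ^ 2 + (h N - h (N - 1)) ^ 2)
    ∧ (∑ i ∈ Finset.Icc 1 (N - 1), (h (i + 1) - h i) ^ 2)
      ≤ ((N : ℝ) * (N - 1) / 2) *
        ((∑ i ∈ Finset.Icc 2 (N - 1), (2 * h i - h (i + 1) - h (i - 1)) ^ 2)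
          + (h 2 - h 1) ^ 2 + (h N - h (N - 1)) ^ 2) := by
  obtain ⟨n, rfl⟩ := Nat.exists_eq_add_of_le' hN
  set g : ℕ → ℝ := fun k => h (k + 2) - h (k + 1) with hg
  have hgrad : ∑ i ∈ Icc 1 (n + 2 - 1), (h (i + 1) - h i) ^ 2 = ∑ i ∈ range (n + 1), g i ^ 2 := by
    rw [← Ico_add_one_right_eq_Icc, sum_Ico_eq_sum_range]
    exact sum_congr rfl fun i _ => by rw [hg, add_comm 1 i]
  have hlap : ∑ i ∈ Icc 2 (n + 2 - 1), (2 * h i - h (i + 1) - h (i - 1)) ^ 2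
      = ∑ j ∈ range n, (g (j + 1) - g j) ^ 2 := by
    rw [← Ico_add_one_right_eq_Icc, sum_Ico_eq_sum_range]
    refine sum_congr rfl fun j _ => ?_
    simp only [hg, show 2 + j - 1 = j + 1 by omega]
    ring_nf
  rw [hgrad, hlap]
  set L := ∑ j ∈ range n, (g (j + 1) - g j) ^ 2
  have hLB : g 0 ^ 2 + L ≤ L + (h 2 - h 1) ^ 2 + (h (n + 2) - h (n + 2 - 1)) ^ 2 := by
    change (h 2 - h 1) ^ 2 + L ≤ _
    linarith [sq_nonneg (h (n + 2) - h (n + 2 - 1))]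
  have hsq : ∑ i ∈ range (n + 1), g i ^ 2
      ≤ ((n + 2 : ℕ) : ℝ) * ((n + 2 : ℕ) - 1) / 2 *
        (L + (h 2 - h 1) ^ 2 + (h (n + 2) - h (n + 2 - 1)) ^ 2) := by
    rw [show ((n + 2 : ℕ) : ℝ) * ((n + 2 : ℕ) - 1) / 2 = (n + 1) * (n + 2) / 2 by push_cast; ring]
    exact (sum_sq_le_mul_sq_add_sum_sq_sub g n).trans
      (mul_le_mul_of_nonneg_left hLB (by positivity))
  refine ⟨sqrt_le_mul_sqrt_of_le_mul hsq ?_ (by positivity) (by positivity), hsq⟩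
  push_cast
  nlinarith [n.cast_nonneg (α := ℝ)]
end

section
/- Let N, N₁, N₂ ∈ ℕ with N = N₁ + N₂, and let g = (g_i)_{i≠N₁, 1≤i≤N-1} be real numbers with Σ_{i≠N₁}(g_i − a)² ≤ C̄/c₋ for constants C̄, c₋ > 0. Define F(g) = (1/N₁)Σ_{i=1}^{N₁-1} i(g_i − a) + (1/N₂)Σ_{i=N₁+1}^{N-1}(N−i)(g_i − a). Then |F(g)| ≤ √(C̄/c₋)·√N. Consequently, if κ > 1/2 and N is sufficiently large, the inequality F(g) ≤ −N^κ − b'₂ + a cannot hold. -/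
/-!
The functional `F` is a single weighted sum `∑_{i ≠ N₁} wᵢ (gᵢ - a)` whose weights `i / N₁` and
`(N - i) / N₂` all lie in `[0, 1]`. By Cauchy–Schwarz, `|F(g)|` is at most the square root of the
number of gaps times the root of `∑ (gᵢ - a)²`, i.e. at most `√(C̄/c₋) · √N`. Since `κ > 1/2`,
`N^κ` eventually exceeds `√(C̄/c₋) · √N`, so `F(g) ≤ -N^κ - b'₂ + a ≤ -N^κ` is impossible.
-/

open Finset

section CauchySchwarz

variable {ι : Type*}

theorem abs_sum_mul_le_sqrt_mul_sqrt (s : Finset ι) (w f : ι → ℝ) :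
    |∑ i ∈ s, w i * f i| ≤ √(∑ i ∈ s, w i ^ 2) * √(∑ i ∈ s, f i ^ 2) := by
  refine abs_le.2 ⟨?_, Real.sum_mul_le_sqrt_mul_sqrt s w f⟩
  have h := Real.sum_mul_le_sqrt_mul_sqrt s (fun i => -w i) f
  simp only [neg_mul, sum_neg_distrib, neg_sq] at h
  linarith

theorem abs_sum_mul_le_sqrt_card_mul_sqrt {s : Finset ι} {w : ι → ℝ}
    (hw : ∀ i ∈ s, |w i| ≤ 1) (f : ι → ℝ) :
    |∑ i ∈ s, w i * f i| ≤ √(#s : ℝ) * √(∑ i ∈ s, f i ^ 2) := by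
  have hw2 : ∑ i ∈ s, w i ^ 2 ≤ #s := by
    simpa using sum_le_card_nsmul s (fun i => w i ^ 2) 1
      fun i hi => (sq_le_one_iff_abs_le_one _).2 (hw i hi)
  calc |∑ i ∈ s, w i * f i| ≤ √(∑ i ∈ s, w i ^ 2) * √(∑ i ∈ s, f i ^ 2) :=
        abs_sum_mul_le_sqrt_mul_sqrt s w f
    _ ≤ √(#s : ℝ) * √(∑ i ∈ s, f i ^ 2) := by gcongr

theorem abs_sum_add_sum_mul_le_sqrt_card_mul_sqrt [DecidableEq ι] {s t : Finset ι} (hst : Disjoint s t)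
    {u v : ι → ℝ} (hu : ∀ i ∈ s, |u i| ≤ 1) (hv : ∀ i ∈ t, |v i| ≤ 1) (f : ι → ℝ) :
    |∑ i ∈ s, u i * f i + ∑ i ∈ t, v i * f i| ≤
      √(#(s ∪ t) : ℝ) * √(∑ i ∈ s ∪ t, f i ^ 2) := by
  have hsum : ∑ i ∈ s, u i * f i + ∑ i ∈ t, v i * f i =
      ∑ i ∈ s ∪ t, s.piecewise u v i * f i := by
    rw [sum_union hst]
    congr 1 <;> refine sum_congr rfl fun i hi => ?_
    · rw [piecewise_eq_of_mem _ _ _ hi]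
    · rw [piecewise_eq_of_notMem _ _ _ (disjoint_right.1 hst hi)]
  rw [hsum]
  refine abs_sum_mul_le_sqrt_card_mul_sqrt (fun i hi => ?_) f
  by_cases his : i ∈ s
  · simpa [piecewise_eq_of_mem _ _ _ his] using hu i his
  · have hit : i ∈ t := by simpa [his] using mem_union.1 hi
    simpa [piecewise_eq_of_notMem _ _ _ his] using hv i hit

end CauchySchwarz

noncomputable def gapFunctional (a : ℝ) (N N₁ N₂ : ℕ) (g : ℕ → ℝ) : ℝ :=
  (1 / (N₁ : ℝ)) * ∑ i ∈ Icc 1 (N₁ - 1), (i : ℝ) * (g i - a)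
    + (1 / (N₂ : ℝ)) * ∑ i ∈ Icc (N₁ + 1) (N - 1), ((N : ℝ) - i) * (g i - a)

theorem Icc_one_erase_eq_union {N N₁ : ℕ} (h : N₁ ≤ N) :
    (Icc 1 (N - 1)).erase N₁ = Icc 1 (N₁ - 1) ∪ Icc (N₁ + 1) (N - 1) := by
  ext i
  simp only [mem_erase, mem_Icc, mem_union]
  omega

theorem abs_gapFunctional_le {a C : ℝ} {N N₁ N₂ : ℕ} {g : ℕ → ℝ} (hN : N = N₁ + N₂)
    (hg : ∑ i ∈ (Icc 1 (N - 1)).erase N₁, (g i - a) ^ 2 ≤ C) :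
    |gapFunctional a N N₁ N₂ g| ≤ √C * √N := by
  have hdisj : Disjoint (Icc 1 (N₁ - 1)) (Icc (N₁ + 1) (N - 1)) := by
    simp only [disjoint_left, mem_Icc]
    omega
  have hleft : ∀ i ∈ Icc 1 (N₁ - 1), |(i : ℝ) / N₁| ≤ 1 := fun i hi => by
    have hiN₁ : (i : ℝ) ≤ N₁ := by norm_cast; simp only [mem_Icc] at hi; omega
    rw [abs_of_nonneg (by positivity)]
    exact div_le_one_of_le₀ hiN₁ (Nat.cast_nonneg _)
  have hright : ∀ i ∈ Icc (N₁ + 1) (N - 1), |((N : ℝ) - i) / N₂| ≤ 1 := fun i hi => by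
    simp only [mem_Icc] at hi
    have hiN : (i : ℝ) ≤ N := by norm_cast; omega
    have hNi : (N : ℝ) ≤ i + N₂ := by norm_cast; omega
    rw [abs_of_nonneg (div_nonneg (by linarith) (Nat.cast_nonneg _))]
    exact div_le_one_of_le₀ (by linarith) (Nat.cast_nonneg _)
  have hF : gapFunctional a N N₁ N₂ g = ∑ i ∈ Icc 1 (N₁ - 1), (i : ℝ) / N₁ * (g i - a)
      + ∑ i ∈ Icc (N₁ + 1) (N - 1), ((N : ℝ) - i) / N₂ * (g i - a) := by
    rw [gapFunctional, mul_sum, mul_sum]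
    congr 1 <;> exact sum_congr rfl fun i _ => by ring
  have hcard : #((Icc 1 (N - 1)).erase N₁) ≤ N :=
    (card_erase_le).trans (by simp only [Nat.card_Icc]; omega)
  rw [hF, mul_comm]
  refine (abs_sum_add_sum_mul_le_sqrt_card_mul_sqrt hdisj hleft hright _).trans ?_
  rw [← Icc_one_erase_eq_union (by omega)]
  gcongr

theorem exists_mul_sqrt_lt_rpow (K : ℝ) {κ : ℝ} (hκ : 1 / 2 < κ) :
    ∃ N₀ : ℕ, ∀ N : ℕ, N₀ ≤ N → K * √N < (N : ℝ) ^ κ := by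
  have htend : Filter.Tendsto (fun n : ℕ => (n : ℝ) ^ (κ - 1 / 2)) Filter.atTop Filter.atTop :=
    (tendsto_rpow_atTop (by linarith)).comp tendsto_natCast_atTop_atTop
  obtain ⟨N₀, hN₀⟩ := Filter.eventually_atTop.1 (htend.eventually_gt_atTop K)
  refine ⟨N₀ + 1, fun N hN => ?_⟩
  have hNpos : (0 : ℝ) < N := by norm_cast; omega
  calc K * √N < (N : ℝ) ^ (κ - 1 / 2) * (N : ℝ) ^ (1 / 2 : ℝ) := by
        rw [Real.sqrt_eq_rpow]
        exact mul_lt_mul_of_pos_right (hN₀ N (by omega)) (Real.rpow_pos_of_pos hNpos _)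
    _ = (N : ℝ) ^ κ := by rw [← Real.rpow_add hNpos]; ring_nf

theorem stmt_8_general (a C c κ b₂' : ℝ)
    (hκ : 1 / 2 < κ) (hb₂' : a ≤ b₂') :
    (∀ (N N₁ N₂ : ℕ) (g : ℕ → ℝ), N = N₁ + N₂ → 1 ≤ N₁ → 1 ≤ N₂ →
      (∑ i ∈ (Finset.Icc 1 (N - 1)).erase N₁, (g i - a) ^ 2) ≤ C / c →
      |(1 / (N₁ : ℝ)) * ∑ i ∈ Finset.Icc 1 (N₁ - 1), (i : ℝ) * (g i - a)
        + (1 / (N₂ : ℝ)) * ∑ i ∈ Finset.Icc (N₁ + 1) (N - 1), ((N : ℝ) - i) * (g i - a)|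
        ≤ Real.sqrt (C / c) * Real.sqrt N)
    ∧ ∃ N₀ : ℕ, ∀ (N N₁ N₂ : ℕ) (g : ℕ → ℝ), N₀ ≤ N → N = N₁ + N₂ → 1 ≤ N₁ → 1 ≤ N₂ →
      (∑ i ∈ (Finset.Icc 1 (N - 1)).erase N₁, (g i - a) ^ 2) ≤ C / c →
      ¬ ((1 / (N₁ : ℝ)) * ∑ i ∈ Finset.Icc 1 (N₁ - 1), (i : ℝ) * (g i - a)
        + (1 / (N₂ : ℝ)) * ∑ i ∈ Finset.Icc (N₁ + 1) (N - 1), ((N : ℝ) - i) * (g i - a)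
          ≤ -(N : ℝ) ^ κ - b₂' + a) := by
  refine ⟨fun N N₁ N₂ g hN _ _ hg => abs_gapFunctional_le hN hg, ?_⟩
  obtain ⟨N₀, hN₀⟩ := exists_mul_sqrt_lt_rpow √(C / c) hκ
  refine ⟨N₀, fun N N₁ N₂ g hN₀N hN _ _ hg hF => ?_⟩
  have hbound := neg_abs_le (gapFunctional a N N₁ N₂ g)
  have habs := abs_gapFunctional_le hN hg
  have hlarge := hN₀ N hN₀N
  unfold gapFunctional at hbound habs
  linarith

/-- Step 2 of Proposition 3.5: the Cauchy–Schwarz bound `|F(g)| ≤ √(C̄/c₋)·√N` on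
`F(g) = (1/N₁)Σ_{i=1}^{N₁-1} i(g_i−a) + (1/N₂)Σ_{i=N₁+1}^{N-1}(N−i)(g_i−a)` when
`Σ_{i≠N₁}(g_i−a)² ≤ C̄/c₋`; consequently, for `κ > 1/2` and `N` large, the inequality
`F(g) ≤ −N^κ − b'₂ + a` cannot hold. -/
theorem stmt_8 (a C c κ b₂' : ℝ) (hC : 0 < C) (hc : 0 < c)
    (hκ : 1 / 2 < κ) (hb₂' : a ≤ b₂') :
    (∀ (N N₁ N₂ : ℕ) (g : ℕ → ℝ), N = N₁ + N₂ → 1 ≤ N₁ → 1 ≤ N₂ →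
      (∑ i ∈ (Finset.Icc 1 (N - 1)).erase N₁, (g i - a) ^ 2) ≤ C / c →
      |(1 / (N₁ : ℝ)) * ∑ i ∈ Finset.Icc 1 (N₁ - 1), (i : ℝ) * (g i - a)
        + (1 / (N₂ : ℝ)) * ∑ i ∈ Finset.Icc (N₁ + 1) (N - 1), ((N : ℝ) - i) * (g i - a)|
        ≤ Real.sqrt (C / c) * Real.sqrt N)
    ∧ ∃ N₀ : ℕ, ∀ (N N₁ N₂ : ℕ) (g : ℕ → ℝ), N₀ ≤ N → N = N₁ + N₂ → 1 ≤ N₁ → 1 ≤ N₂ →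
      (∑ i ∈ (Finset.Icc 1 (N - 1)).erase N₁, (g i - a) ^ 2) ≤ C / c →
      ¬ ((1 / (N₁ : ℝ)) * ∑ i ∈ Finset.Icc 1 (N₁ - 1), (i : ℝ) * (g i - a)
        + (1 / (N₂ : ℝ)) * ∑ i ∈ Finset.Icc (N₁ + 1) (N - 1), ((N : ℝ) - i) * (g i - a)
          ≤ -(N : ℝ) ^ κ - b₂' + a) :=
  stmt_8_general a C c κ b₂' hκ hb₂'
end
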